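/- arXiv:2011.05560 — 3 statements merged into one kernel-verified Lean document; each statement's English description precedes it below -/
import Mathlib

section
/- Let (g, [·,...,·], α, β) be an n-BiHom-Lie algebra. The coboundary operators δ¹: C¹(g,g) → C²(g,g) and δ²: C²(g,g) → C³(g,g) satisfy δ² ∘ δ¹ = 0; that is, for every 1-cochain f and all x₁,...,x_{n−1}, y₁,...,yₙ ∈ g, δ²(δ¹f)(x₁,...,x_{n−1}, y₁,...,yₙ) = 0. -/
open Function Finset Module

universe u v w

/-- Twist a tuple: apply `a` to the last coordinate and `b` to all the other coordinates,
so that `twMap a b x = (b x₁, …, b xₙ₋₁, a xₙ)`. -/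
def twMap {g : Type v} (a b : g → g) {m : ℕ} (x : Fin (m + 1) → g) : Fin (m + 1) → g :=
  fun i => if i = Fin.last m then a (x i) else b (x i)

/-- An `n`-BiHom-Lie algebra over `K`, where the arity of the bracket is `n = m + 1`. -/
structure NBiHomLie (K : Type u) [Field K] (m : ℕ) (g : Type v)
    [AddCommGroup g] [Module K g] where
  br : MultilinearMap K (fun _ : Fin (m + 1) => g) g
  α : g →ₗ[K] g
  β : g →ₗ[K] g
  comm : ∀ z, α (β z) = β (α z)
  alpha_br : ∀ x : Fin (m + 1) → g, α (br x) = br fun i => α (x i)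
  beta_br : ∀ x : Fin (m + 1) → g, β (br x) = br fun i => β (x i)
  skew : ∀ (x : Fin (m + 1) → g) (i j : Fin (m + 1)), (i : ℕ) + 1 = (j : ℕ) →
    br (twMap ⇑α ⇑β x) = - br (twMap ⇑α ⇑β (x ∘ Equiv.swap i j))
  jacobi : ∀ (x : Fin m → g) (y : Fin (m + 1) → g),
    br (Fin.snoc (fun i => β (β (x i))) (br (twMap ⇑α ⇑β y))) =
      ∑ k : Fin (m + 1), ((-1 : K) ^ (m - (k : ℕ))) •
        br (Fin.snoc (fun i => β (β (y (k.succAbove i))))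
          (br (twMap ⇑α ⇑β (Fin.snoc x (y k)))))

/-- A representation of an `n`-BiHom-Lie algebra (`n = m + 2`) on a vector space `V`. -/
structure NRep {K : Type u} [Field K] {m : ℕ} {g : Type v} [AddCommGroup g] [Module K g]
    (L : NBiHomLie K (m + 1) g) (V : Type w) [AddCommGroup V] [Module K V] where
  ρ : MultilinearMap K (fun _ : Fin (m + 1) => g) (Module.End K V)
  αV : V →ₗ[K] V
  βV : V →ₗ[K] V
  rep1 : ∀ x : Fin (m + 1) → g, ρ (fun i => L.α (x i)) ∘ₗ αV = αV ∘ₗ ρ x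
  rep2 : ∀ x : Fin (m + 1) → g, ρ (fun i => L.β (x i)) ∘ₗ βV = βV ∘ₗ ρ x
  rep3 : ∀ x y : Fin (m + 1) → g,
    ρ (fun i => L.α (L.β (x i))) ∘ₗ ρ y - ρ (fun i => L.β (y i)) ∘ₗ ρ (fun i => L.α (x i)) =
      ∑ i : Fin (m + 1),
        ρ (Function.update (fun j => L.β (y j)) i
            (L.br (Fin.snoc (fun j => L.β (x j)) (y i)))) ∘ₗ βV
  rep4 : ∀ x y : Fin (m + 1) → g,
    ρ (Fin.snoc (fun j : Fin m => L.β (y j.succ))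
        (L.br (Fin.snoc (fun j => L.β (x j)) (y 0)))) ∘ₗ βV =
      (∑ i : Fin (m + 1), ((-1 : K) ^ (m + 1 - (i : ℕ))) •
        (ρ (Fin.snoc (fun j : Fin m => L.α (L.β (x (i.succAbove j)))) (L.β (y 0))) ∘ₗ
          ρ (Fin.snoc (fun j : Fin m => y j.succ) (L.α (x i))))) +
        ρ (fun i => L.α (L.β (x i))) ∘ₗ ρ y
/-- An `n`-Lie algebra (Filippov algebra) over `K`, where the arity is `n = m + 1`. -/
structure NLie (K : Type u) [Field K] (m : ℕ) (g : Type v)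
    [AddCommGroup g] [Module K g] where
  br : MultilinearMap K (fun _ : Fin (m + 1) => g) g
  skew : ∀ (x : Fin (m + 1) → g) (i j : Fin (m + 1)), i ≠ j →
    br (x ∘ Equiv.swap i j) = - br x
  filippov : ∀ (x : Fin m → g) (y : Fin (m + 1) → g),
    br (Fin.snoc x (br y)) =
      ∑ i : Fin (m + 1), br (Function.update y i (br (Fin.snoc x (y i))))

/-- A representation of an `n`-Lie algebra (`n = m + 2`) on a vector space `V`. -/
structure NLieRep {K : Type u} [Field K] {m : ℕ} {g : Type v} [AddCommGroup g] [Module K g]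
    (L : NLie K (m + 1) g) (V : Type w) [AddCommGroup V] [Module K V] where
  ρ : MultilinearMap K (fun _ : Fin (m + 1) => g) (Module.End K V)
  repa : ∀ x y : Fin (m + 1) → g,
    ρ x ∘ₗ ρ y - ρ y ∘ₗ ρ x =
      ∑ i : Fin (m + 1), ρ (Function.update y i (L.br (Fin.snoc x (y i))))
  repb : ∀ x y : Fin (m + 1) → g,
    ρ (Fin.snoc (fun j : Fin m => y j.succ) (L.br (Fin.snoc x (y 0)))) =
      (∑ i : Fin (m + 1), ((-1 : K) ^ (m + 1 - (i : ℕ))) •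
        (ρ (Fin.snoc (fun j : Fin m => x (i.succAbove j)) (y 0)) ∘ₗ
          ρ (Fin.snoc (fun j : Fin m => y j.succ) (x i)))) + ρ x ∘ₗ ρ y

/-- An `n`-cocycle (`n = m + 2`) on an `n`-BiHom-Lie algebra `L` with values in a
representation `R`. -/
def IsNCocycle {K : Type u} [Field K] {m : ℕ} {g : Type v} {V : Type w}
    [AddCommGroup g] [Module K g] [AddCommGroup V] [Module K V]
    (L : NBiHomLie K (m + 1) g) (R : NRep L V)
    (θ : (Fin (m + 2) → g) → V) : Prop :=
  (∀ x, R.αV (θ x) = θ fun i => L.α (x i)) ∧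
  (∀ x, R.βV (θ x) = θ fun i => L.β (x i)) ∧
  (∀ (x : Fin (m + 2) → g) (i j : Fin (m + 2)), (i : ℕ) + 1 = (j : ℕ) →
    θ (fun k => L.β (x k)) = - θ (fun k => L.β (x (Equiv.swap i j k)))) ∧
  (∀ (x : Fin (m + 1) → g) (y : Fin (m + 2) → g),
    θ (Fin.snoc (fun i => L.β (L.β (x i))) (L.br (twMap ⇑L.α ⇑L.β y))) +
        R.ρ (fun i => L.β (L.β (x i))) (θ (twMap ⇑L.α ⇑L.β y)) =
      ∑ k : Fin (m + 2), ((-1 : K) ^ (m + 1 - (k : ℕ))) •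
        (θ (Fin.snoc (fun i : Fin (m + 1) => L.β (L.β (y (k.succAbove i))))
              (L.br (twMap ⇑L.α ⇑L.β (Fin.snoc x (y k))))) +
          R.ρ (fun i => L.β (L.β (y (k.succAbove i))))
            (θ (twMap ⇑L.α ⇑L.β (Fin.snoc x (y k))))))

/-- An `n`-cocycle (`n = m + 2`) with values in the coadjoint representation
`ad*(x₁,…,xₙ₋₁)(f) = - f ∘ ad(x₁,…,xₙ₋₁)` on the dual space `g*`. -/
def IsCoadCocycle {K : Type u} [Field K] {m : ℕ} {g : Type v}
    [AddCommGroup g] [Module K g] (L : NBiHomLie K (m + 1) g)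
    (θ : (Fin (m + 2) → g) → Module.Dual K g) : Prop :=
  (∀ (x : Fin (m + 2) → g) (z : g), θ x (L.α z) = θ (fun i => L.α (x i)) z) ∧
  (∀ (x : Fin (m + 2) → g) (z : g), θ x (L.β z) = θ (fun i => L.β (x i)) z) ∧
  (∀ (x : Fin (m + 2) → g) (i j : Fin (m + 2)), (i : ℕ) + 1 = (j : ℕ) →
    θ (fun k => L.β (x k)) = - θ (fun k => L.β (x (Equiv.swap i j k)))) ∧
  (∀ (x : Fin (m + 1) → g) (y : Fin (m + 2) → g) (z : g),
    θ (Fin.snoc (fun i => L.β (L.β (x i))) (L.br (twMap ⇑L.α ⇑L.β y))) z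
        - θ (twMap ⇑L.α ⇑L.β y) (L.br (Fin.snoc (fun i => L.β (L.β (x i))) z)) =
      ∑ k : Fin (m + 2), ((-1 : K) ^ (m + 1 - (k : ℕ))) •
        (θ (Fin.snoc (fun i : Fin (m + 1) => L.β (L.β (y (k.succAbove i))))
              (L.br (twMap ⇑L.α ⇑L.β (Fin.snoc x (y k))))) z
          - θ (twMap ⇑L.α ⇑L.β (Fin.snoc x (y k)))
              (L.br (Fin.snoc (fun i => L.β (L.β (y (k.succAbove i)))) z))))

/-- `S` is the `T*_θ`-extension of the `n`-BiHom-Lie algebra `L` (`n = m + 2`) by the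
cocycle `θ`, built from the coadjoint representation. -/
def IsTStarExt {K : Type u} [Field K] {m : ℕ} {g : Type v}
    [AddCommGroup g] [Module K g] (L : NBiHomLie K (m + 1) g)
    (θ : (Fin (m + 2) → g) → Module.Dual K g)
    (S : NBiHomLie K (m + 1) (g × Module.Dual K g)) : Prop :=
  (∀ p : g × Module.Dual K g, S.α p = (L.α p.1, p.2 ∘ₗ L.α)) ∧
  (∀ p : g × Module.Dual K g, S.β p = (L.β p.1, p.2 ∘ₗ L.β)) ∧
  (∀ z : Fin (m + 2) → g × Module.Dual K g, (S.br z).1 = L.br fun i => (z i).1) ∧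
  (∀ (z : Fin (m + 2) → g × Module.Dual K g) (w : g),
    (S.br z).2 w = θ (fun i => (z i).1) w
      + (∑ i : Fin (m + 1), ((-1 : K) ^ (m + 1 - (i : ℕ))) •
          (- (z i.castSucc).2 (Function.invFun ⇑L.β (L.α (L.br
              (Fin.snoc (Fin.snoc (fun j : Fin m => (z ((i.succAbove j).castSucc)).1)
                (Function.invFun ⇑L.α (L.β ((z (Fin.last (m + 1))).1)))) w))))))
      + (- (z (Fin.last (m + 1))).2
            (L.br (Fin.snoc (fun j : Fin (m + 1) => (z j.castSucc).1) w))))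
/-- The derived series of an `n`-BiHom-Lie algebra (`n = m + 1`):
`g⁽⁰⁾ = g`, `g⁽ᵖ⁺¹⁾ = [g⁽ᵖ⁾, …, g⁽ᵖ⁾, g]`. -/
def nbhlDerivedSeries {K : Type u} [Field K] {m : ℕ} {g : Type v} [AddCommGroup g] [Module K g]
    (L : NBiHomLie K m g) : ℕ → Submodule K g
  | 0 => ⊤
  | p + 1 => Submodule.span K
      {z | ∃ (a : Fin m → g) (b : g), (∀ i, a i ∈ nbhlDerivedSeries L p) ∧ z = L.br (Fin.snoc a b)}

/-- The central descending series of an `n`-BiHom-Lie algebra (`n = m + 1`):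
`g⁰ = g`, `gᵖ⁺¹ = [gᵖ, g, …, g]`. -/
def nbhlCentralSeries {K : Type u} [Field K] {m : ℕ} {g : Type v} [AddCommGroup g] [Module K g]
    (L : NBiHomLie K m g) : ℕ → Submodule K g
  | 0 => ⊤
  | p + 1 => Submodule.span K
      {z | ∃ (a : g) (b : Fin m → g), a ∈ nbhlCentralSeries L p ∧ z = L.br (Fin.cons a b)}

/-- `(L, B)` is a quadratic `n`-BiHom-Lie algebra (`n = m + 1`): the bilinear form `B` is
nondegenerate, symmetric, `αβ`-invariant and `α`, `β` are `B`-symmetric. -/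
def IsQuadratic {K : Type u} [Field K] {m : ℕ} {E : Type v} [AddCommGroup E] [Module K E]
    (L : NBiHomLie K m E) (B : E → E → K) : Prop :=
  (∀ x, (∀ y, B x y = 0) → x = 0) ∧
  (∀ x y, B x y = B y x) ∧
  (∀ (x : Fin m → E) (u v : E),
    B (L.br (twMap ⇑L.α ⇑L.β (Fin.snoc x u))) (L.α v) =
      - B (L.α u) (L.br (twMap ⇑L.α ⇑L.β (Fin.snoc x v)))) ∧
  (∀ x y, B (L.α x) y = B x (L.α y)) ∧
  (∀ x y, B (L.β x) y = B x (L.β y))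

/-- `f` is a `1`-cochain of the `n`-BiHom-Lie algebra `L`. -/
def IsCochain1 {K : Type u} [Field K] {m : ℕ} {g : Type v} [AddCommGroup g] [Module K g]
    (L : NBiHomLie K m g) (f : g → g) : Prop :=
  (∀ z, f (L.α z) = L.α (f z)) ∧ (∀ z, f (L.β z) = L.β (f z))

/-- `c` is a `2`-cochain of the `n`-BiHom-Lie algebra `L` (`n = m + 1`). -/
def IsCochain2 {K : Type u} [Field K] {m : ℕ} {g : Type v} [AddCommGroup g] [Module K g]
    (L : NBiHomLie K m g) (c : (Fin (m + 1) → g) → g) : Prop :=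
  (∀ x, L.α (c x) = c fun i => L.α (x i)) ∧ (∀ x, L.β (c x) = c fun i => L.β (x i))

/-- `d` is a `3`-cochain of the `n`-BiHom-Lie algebra `L` (`n = m + 1`). -/
def IsCochain3 {K : Type u} [Field K] {m : ℕ} {g : Type v} [AddCommGroup g] [Module K g]
    (L : NBiHomLie K m g) (d : (Fin m → g) → (Fin (m + 1) → g) → g) : Prop :=
  (∀ x y, L.α (d x y) = d (fun i => L.α (x i)) fun i => L.α (y i)) ∧
  (∀ x y, L.β (d x y) = d (fun i => L.β (x i)) fun i => L.β (y i))

/-- The first coboundary operator `δ¹` of an `n`-BiHom-Lie algebra (`n = m + 1`). -/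
def delta1 {K : Type u} [Field K] {m : ℕ} {g : Type v} [AddCommGroup g] [Module K g]
    (L : NBiHomLie K m g) (f : g → g) : (Fin (m + 1) → g) → g :=
  fun x => - f (L.br x) + ∑ i : Fin (m + 1), L.br (Function.update x i (f (x i)))

/-- The second coboundary operator `δ²` of an `n`-BiHom-Lie algebra (`n = m + 1`). -/
def delta2 {K : Type u} [Field K] {m : ℕ} {g : Type v} [AddCommGroup g] [Module K g]
    (L : NBiHomLie K m g) (c : (Fin (m + 1) → g) → g) :
    (Fin m → g) → (Fin (m + 1) → g) → g :=
  fun x y =>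
    L.br (Fin.snoc (fun i => L.β (L.β (x i))) (c (twMap ⇑L.α ⇑L.β y))) +
      c (Fin.snoc (fun i => L.β (L.β (x i))) (L.br (twMap ⇑L.α ⇑L.β y))) -
      ∑ i : Fin (m + 1), ((-1 : K) ^ (m - (i : ℕ))) •
        (L.br (Fin.snoc (fun j : Fin m => L.β (L.β (y (i.succAbove j))))
            (c (twMap ⇑L.α ⇑L.β (Fin.snoc x (y i))))) +
          c (Fin.snoc (fun j : Fin m => L.β (L.β (y (i.succAbove j))))
            (L.br (twMap ⇑L.α ⇑L.β (Fin.snoc x (y i))))))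

/-- `F` is a one-parameter formal deformation `f_t = Σ_p F p · tᵖ` of the
`n`-BiHom-Lie algebra `L` (`n = m + 1`). -/
def IsDeformation {K : Type u} [Field K] {m : ℕ} {g : Type v} [AddCommGroup g] [Module K g]
    (L : NBiHomLie K m g) (F : ℕ → MultilinearMap K (fun _ : Fin (m + 1) => g) g) : Prop :=
  (∀ x, F 0 x = L.br x) ∧
  (∀ (p : ℕ) (x : Fin (m + 1) → g), L.α (F p x) = F p fun i => L.α (x i)) ∧
  (∀ (p : ℕ) (x : Fin (m + 1) → g), L.β (F p x) = F p fun i => L.β (x i)) ∧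
  (∀ (l : ℕ) (x : Fin m → g) (y : Fin (m + 1) → g),
    ∑ p ∈ Finset.range (l + 1),
        F p (Fin.snoc (fun i => L.β (L.β (x i))) (F (l - p) (twMap ⇑L.α ⇑L.β y))) =
      ∑ k : Fin (m + 1), ((-1 : K) ^ (m - (k : ℕ))) •
        ∑ p ∈ Finset.range (l + 1),
          F p (Fin.snoc (fun j => L.β (L.β (y (k.succAbove j))))
            (F (l - p) (twMap ⇑L.α ⇑L.β (Fin.snoc x (y k))))))

/-- `Ψ` is a formal automorphism exhibiting the equivalence of the deformations
`F` and `F'` of the `n`-BiHom-Lie algebra `L` (`n = m + 1`). -/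
def IsEquivDeform {K : Type u} [Field K] {m : ℕ} {g : Type v} [AddCommGroup g] [Module K g]
    (L : NBiHomLie K m g) (F F' : ℕ → MultilinearMap K (fun _ : Fin (m + 1) => g) g)
    (Ψ : ℕ → (g →ₗ[K] g)) : Prop :=
  (∀ z, Ψ 0 z = z) ∧
  (∀ (i : ℕ) (z : g), Ψ i (L.α z) = L.α (Ψ i z)) ∧
  (∀ (i : ℕ) (z : g), Ψ i (L.β z) = L.β (Ψ i z)) ∧
  (∀ (l : ℕ) (x : Fin (m + 1) → g),
    ∑ p ∈ Finset.range (l + 1), Ψ p (F (l - p) x) =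
      ∑ p ∈ Finset.range (l + 1),
        ∑ c ∈ Fintype.piFinset (fun _ : Fin (m + 1) => Finset.range (l + 1)),
          if p + ∑ i, c i = l then F' p (fun i => Ψ (c i) (x i)) else 0)
/-- The data of a `T*_θ`-extension: an `n`-BiHom-Lie algebra `B` (`n = m + 2`), an
`n`-cocycle `θ : Bⁿ → B*` for the coadjoint representation satisfying the symmetry
condition, and the resulting quadratic `n`-BiHom-Lie algebra structure on `B ⊕ B*`. -/
structure TStarExtData (K : Type u) [Field K] (m : ℕ) where
  B : Type v
  [addB : AddCommGroup B]
  [modB : Module K B]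
  LB : NBiHomLie K (m + 1) B
  θ : MultilinearMap K (fun _ : Fin (m + 2) => B) (Module.Dual K B)
  hθ : IsCoadCocycle LB ⇑θ
  hθsym : ∀ (x : Fin (m + 1) → B) (u v : B),
    θ (twMap ⇑LB.α ⇑LB.β (Fin.snoc x u)) (LB.α v) +
      θ (twMap ⇑LB.α ⇑LB.β (Fin.snoc x v)) (LB.α u) = 0
  S : NBiHomLie K (m + 1) (B × Module.Dual K B)
  hS : IsTStarExt LB ⇑θ S

attribute [instance] TStarExtData.addB TStarExtData.modB
/-- **`δ² ∘ δ¹ = 0`.** For an `n`-BiHom-Lie algebra (`n = m + 1`) and every `1`-cochain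
`f`, one has `δ²(δ¹f) = 0`. -/
theorem delta2_comp_delta1_eq_zero {K : Type u} [Field K] {m : ℕ} {g : Type v}
    [AddCommGroup g] [Module K g] (L : NBiHomLie K m g)
    (f : g →ₗ[K] g) (hf : IsCochain1 L ⇑f) :
    ∀ (x : Fin m → g) (y : Fin (m + 1) → g), delta2 L (delta1 L ⇑f) x y = 0 := by
  obtain ⟨hfα, hfβ⟩ := hf
  intro x y
  classical
  -- linearity of the bracket in the last slot
  have Φex : ∀ a : Fin m → g, ∃ Φ : g →ₗ[K] g, ∀ z, Φ z = L.br (Fin.snoc a z) := by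
    intro a
    exact ⟨{ toFun := fun z => L.br (Fin.snoc a z)
             map_add' := fun u v => L.br.snoc_add a u v
             map_smul' := fun c u => L.br.snoc_smul a c u }, fun _ => rfl⟩
  have brpush : ∀ (a : Fin m → g) (u : g) (F : Fin (m + 1) → g),
      L.br (Fin.snoc a (-u + ∑ j, F j)) =
        -L.br (Fin.snoc a u) + ∑ j, L.br (Fin.snoc a (F j)) := by
    intro a u F
    obtain ⟨Φ, hΦ⟩ := Φex a
    simp only [← hΦ, map_add, map_neg, map_sum]
  have brpush3 : ∀ (a : Fin m → g) (u v : g) (F : Fin m → g),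
      L.br (Fin.snoc a (-u + ((∑ i, F i) + v))) =
        -L.br (Fin.snoc a u) + ((∑ i, L.br (Fin.snoc a (F i))) + L.br (Fin.snoc a v)) := by
    intro a u v F
    obtain ⟨Φ, hΦ⟩ := Φex a
    simp only [← hΦ, map_add, map_neg, map_sum]
  -- updated tuples interact with twMap
  have h1 : ∀ (z : Fin (m + 1) → g) (j : Fin (m + 1)),
      Function.update (twMap ⇑L.α ⇑L.β z) j (f (twMap ⇑L.α ⇑L.β z j)) =
        twMap ⇑L.α ⇑L.β (Function.update z j (f (z j))) := by
    intro z j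
    funext i
    rcases eq_or_ne i j with rfl | h
    · by_cases hl : i = Fin.last m
      · simp [twMap, hl, hfα]
      · simp [twMap, hl, hfβ]
    · simp [twMap, Function.update_of_ne h]
  have h2 : ∀ z : Fin (m + 1) → g,
      delta1 L ⇑f (twMap ⇑L.α ⇑L.β z) =
        -f (L.br (twMap ⇑L.α ⇑L.β z)) +
          ∑ j, L.br (twMap ⇑L.α ⇑L.β (Function.update z j (f (z j)))) := by
    intro z
    simp only [delta1]
    congr 1
    exact Finset.sum_congr rfl fun j _ => by rw [h1]
  have h3 : ∀ (a : Fin m → g) (b : g),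
      delta1 L ⇑f (Fin.snoc a b) =
        -f (L.br (Fin.snoc a b)) +
          ((∑ i, L.br (Fin.snoc (Function.update a i (f (a i))) b)) +
            L.br (Fin.snoc a (f b))) := by
    intro a b
    simp only [delta1]
    rw [Fin.sum_univ_castSucc]
    congr 1
    congr 1
    · exact Finset.sum_congr rfl fun i _ => by rw [Fin.snoc_castSucc, ← Fin.snoc_update]
    · rw [Fin.snoc_last, Fin.update_snoc_last]
  have h4 : ∀ k : Fin (m + 1),
      delta1 L ⇑f (twMap ⇑L.α ⇑L.β (Fin.snoc x (y k))) =
        -f (L.br (twMap ⇑L.α ⇑L.β (Fin.snoc x (y k)))) +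
          ((∑ i, L.br (twMap ⇑L.α ⇑L.β (Fin.snoc (Function.update x i (f (x i))) (y k)))) +
            L.br (twMap ⇑L.α ⇑L.β (Fin.snoc x (f (y k))))) := by
    intro k
    rw [h2, Fin.sum_univ_castSucc]
    congr 1
    congr 1
    · refine Finset.sum_congr rfl fun i _ => ?_
      rw [Fin.snoc_castSucc, ← Fin.snoc_update]
    · rw [Fin.snoc_last, Fin.update_snoc_last]
  have h5 : ∀ i : Fin m,
      Function.update (fun j => L.β (L.β (x j))) i (f (L.β (L.β (x i)))) =
        fun j => L.β (L.β (Function.update x i (f (x i)) j)) := by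
    intro i
    funext j
    rcases eq_or_ne j i with rfl | h
    · simp [hfβ]
    · simp [Function.update_of_ne h]
  have h6 : ∀ k : Fin (m + 1),
      (fun i' => L.β (L.β (Function.update y k (f (y k)) (k.succAbove i')))) =
        fun i' => L.β (L.β (y (k.succAbove i'))) := by
    intro k
    funext i'
    rw [Function.update_of_ne (Fin.succAbove_ne k i')]
  have h7 : ∀ (k : Fin (m + 1)) (i : Fin m),
      (fun i' => L.β (L.β (Function.update y (k.succAbove i)
          (f (y (k.succAbove i))) (k.succAbove i')))) =
        Function.update (fun j => L.β (L.β (y (k.succAbove j)))) i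
          (f (L.β (L.β (y (k.succAbove i))))) := by
    intro k i
    funext i'
    rcases eq_or_ne i' i with rfl | h
    · simp [hfβ]
    · rw [Function.update_of_ne h,
        Function.update_of_ne (fun hh => h (Fin.succAbove_right_injective hh))]
  have fJ0 : f (L.br (Fin.snoc (fun i => L.β (L.β (x i))) (L.br (twMap ⇑L.α ⇑L.β y)))) =
      ∑ k : Fin (m + 1), ((-1 : K) ^ (m - (k : ℕ))) •
        f (L.br (Fin.snoc (fun i => L.β (L.β (y (k.succAbove i))))
          (L.br (twMap ⇑L.α ⇑L.β (Fin.snoc x (y k)))))) := by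
    have := congrArg f (L.jacobi x y)
    simpa [map_sum, map_smul] using this
  have perk : ∀ k : Fin (m + 1),
      (∑ j : Fin (m + 1),
          L.br (Fin.snoc
            (fun i' => L.β (L.β (Function.update y j (f (y j)) (k.succAbove i'))))
            (L.br (twMap ⇑L.α ⇑L.β (Fin.snoc x (Function.update y j (f (y j)) k)))))) -
        f (L.br (Fin.snoc (fun i' => L.β (L.β (y (k.succAbove i'))))
            (L.br (twMap ⇑L.α ⇑L.β (Fin.snoc x (y k)))))) +
        ∑ i : Fin m,
          L.br (Fin.snoc (fun i' => L.β (L.β (y (k.succAbove i'))))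
            (L.br (twMap ⇑L.α ⇑L.β (Fin.snoc (Function.update x i (f (x i))) (y k))))) =
      L.br (Fin.snoc (fun j : Fin m => L.β (L.β (y (k.succAbove j))))
          (delta1 L ⇑f (twMap ⇑L.α ⇑L.β (Fin.snoc x (y k))))) +
        delta1 L ⇑f (Fin.snoc (fun j : Fin m => L.β (L.β (y (k.succAbove j))))
          (L.br (twMap ⇑L.α ⇑L.β (Fin.snoc x (y k))))) := by
    intro k
    rw [Fin.sum_univ_succAbove _ k]
    simp only [Function.update_self, h6, h7,
      Function.update_of_ne (Fin.ne_succAbove k _)]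
    rw [h4 k, brpush3, h3]
    abel
  have main :
      L.br (Fin.snoc (fun i => L.β (L.β (x i))) (delta1 L ⇑f (twMap ⇑L.α ⇑L.β y))) +
        delta1 L ⇑f (Fin.snoc (fun i => L.β (L.β (x i))) (L.br (twMap ⇑L.α ⇑L.β y))) =
      ∑ k : Fin (m + 1), ((-1 : K) ^ (m - (k : ℕ))) •
        (L.br (Fin.snoc (fun j : Fin m => L.β (L.β (y (k.succAbove j))))
            (delta1 L ⇑f (twMap ⇑L.α ⇑L.β (Fin.snoc x (y k))))) +
          delta1 L ⇑f (Fin.snoc (fun j : Fin m => L.β (L.β (y (k.succAbove j))))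
            (L.br (twMap ⇑L.α ⇑L.β (Fin.snoc x (y k)))))) := by
    calc
      L.br (Fin.snoc (fun i => L.β (L.β (x i))) (delta1 L ⇑f (twMap ⇑L.α ⇑L.β y))) +
          delta1 L ⇑f (Fin.snoc (fun i => L.β (L.β (x i))) (L.br (twMap ⇑L.α ⇑L.β y)))
        = (-L.br (Fin.snoc (fun i => L.β (L.β (x i))) (f (L.br (twMap ⇑L.α ⇑L.β y)))) +
            ∑ j, L.br (Fin.snoc (fun i => L.β (L.β (x i)))
              (L.br (twMap ⇑L.α ⇑L.β (Function.update y j (f (y j))))))) +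
          (-f (L.br (Fin.snoc (fun i => L.β (L.β (x i))) (L.br (twMap ⇑L.α ⇑L.β y)))) +
            ((∑ i, L.br (Fin.snoc (fun j => L.β (L.β (Function.update x i (f (x i)) j)))
                (L.br (twMap ⇑L.α ⇑L.β y)))) +
              L.br (Fin.snoc (fun i => L.β (L.β (x i))) (f (L.br (twMap ⇑L.α ⇑L.β y)))))) := by
          rw [h2 y, brpush, h3]
          simp only [h5]
      _ = (∑ j, L.br (Fin.snoc (fun i => L.β (L.β (x i)))
              (L.br (twMap ⇑L.α ⇑L.β (Function.update y j (f (y j))))))) -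
            f (L.br (Fin.snoc (fun i => L.β (L.β (x i))) (L.br (twMap ⇑L.α ⇑L.β y)))) +
            ∑ i, L.br (Fin.snoc (fun j => L.β (L.β (Function.update x i (f (x i)) j)))
              (L.br (twMap ⇑L.α ⇑L.β y))) := by
          abel
      _ = (∑ j, ∑ k : Fin (m + 1), ((-1 : K) ^ (m - (k : ℕ))) •
              L.br (Fin.snoc
                (fun i' => L.β (L.β (Function.update y j (f (y j)) (k.succAbove i'))))
                (L.br (twMap ⇑L.α ⇑L.β (Fin.snoc x (Function.update y j (f (y j)) k)))))) -
            (∑ k : Fin (m + 1), ((-1 : K) ^ (m - (k : ℕ))) •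
              f (L.br (Fin.snoc (fun i' => L.β (L.β (y (k.succAbove i'))))
                (L.br (twMap ⇑L.α ⇑L.β (Fin.snoc x (y k))))))) +
            ∑ i, ∑ k : Fin (m + 1), ((-1 : K) ^ (m - (k : ℕ))) •
              L.br (Fin.snoc (fun i' => L.β (L.β (y (k.succAbove i'))))
                (L.br (twMap ⇑L.α ⇑L.β (Fin.snoc (Function.update x i (f (x i))) (y k))))) := by
          rw [fJ0]
          congr 1
          congr 1
          · exact Finset.sum_congr rfl fun j _ =>
              L.jacobi x (Function.update y j (f (y j)))
          · exact Finset.sum_congr rfl fun i _ =>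
              L.jacobi (Function.update x i (f (x i))) y
      _ = (∑ k : Fin (m + 1), ∑ j, ((-1 : K) ^ (m - (k : ℕ))) •
              L.br (Fin.snoc
                (fun i' => L.β (L.β (Function.update y j (f (y j)) (k.succAbove i'))))
                (L.br (twMap ⇑L.α ⇑L.β (Fin.snoc x (Function.update y j (f (y j)) k)))))) -
            (∑ k : Fin (m + 1), ((-1 : K) ^ (m - (k : ℕ))) •
              f (L.br (Fin.snoc (fun i' => L.β (L.β (y (k.succAbove i'))))
                (L.br (twMap ⇑L.α ⇑L.β (Fin.snoc x (y k))))))) +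
            ∑ k : Fin (m + 1), ∑ i, ((-1 : K) ^ (m - (k : ℕ))) •
              L.br (Fin.snoc (fun i' => L.β (L.β (y (k.succAbove i'))))
                (L.br (twMap ⇑L.α ⇑L.β (Fin.snoc (Function.update x i (f (x i))) (y k))))) := by
          congr 1
          congr 1
          · exact Finset.sum_comm
          · exact Finset.sum_comm
      _ = ∑ k : Fin (m + 1), ((-1 : K) ^ (m - (k : ℕ))) •
            ((∑ j, L.br (Fin.snoc
                (fun i' => L.β (L.β (Function.update y j (f (y j)) (k.succAbove i'))))
                (L.br (twMap ⇑L.α ⇑L.β (Fin.snoc x (Function.update y j (f (y j)) k)))))) -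
              f (L.br (Fin.snoc (fun i' => L.β (L.β (y (k.succAbove i'))))
                (L.br (twMap ⇑L.α ⇑L.β (Fin.snoc x (y k)))))) +
              ∑ i, L.br (Fin.snoc (fun i' => L.β (L.β (y (k.succAbove i'))))
                (L.br (twMap ⇑L.α ⇑L.β (Fin.snoc (Function.update x i (f (x i))) (y k)))))) := by
          rw [← Finset.sum_sub_distrib, ← Finset.sum_add_distrib]
          exact Finset.sum_congr rfl fun k _ => by
            simp only [smul_add, smul_sub, Finset.smul_sum]
      _ = ∑ k : Fin (m + 1), ((-1 : K) ^ (m - (k : ℕ))) •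
            (L.br (Fin.snoc (fun j : Fin m => L.β (L.β (y (k.succAbove j))))
                (delta1 L ⇑f (twMap ⇑L.α ⇑L.β (Fin.snoc x (y k))))) +
              delta1 L ⇑f (Fin.snoc (fun j : Fin m => L.β (L.β (y (k.succAbove j))))
                (L.br (twMap ⇑L.α ⇑L.β (Fin.snoc x (y k)))))) :=
          Finset.sum_congr rfl fun k _ => congrArg _ (perk k)
  simp only [delta2]
  rw [sub_eq_zero]
  exact main
end

section
/- Let (g, [·,...,·], α, β) be an n-BiHom-Lie algebra and let f_t = Σ_{p≥0} f_p t^p be a one-parameter formal deformation of g with f₀ = [·,...,·]. Then the infinitesimal deformation f₁ is a 2-cocycle: δ²f₁ = 0, i.e. f₁ ∈ Z²(g, g). -/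
open Function Finset Module

universe u v w

/-- **The infinitesimal deformation is a `2`-cocycle.** If `f_t = Σ_p f_p tᵖ` is a
one-parameter formal deformation of the `n`-BiHom-Lie algebra `(g,[·,…,·],α,β)`
(`n = m + 1`) with `f₀ = [·,…,·]`, then `δ²f₁ = 0`, i.e. `f₁ ∈ Z²(g,g)`. -/
theorem infinitesimal_deformation_is_cocycle {K : Type u} [Field K] {m : ℕ} {g : Type v}
    [AddCommGroup g] [Module K g] (L : NBiHomLie K m g)
    (F : ℕ → MultilinearMap K (fun _ : Fin (m + 1) => g) g)
    (hF : IsDeformation L F) :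
    ∀ (x : Fin m → g) (y : Fin (m + 1) → g), delta2 L ⇑(F 1) x y = 0 := by
  obtain ⟨h0, hα, hβ, hdef⟩ := hF
  intro x y
  have h := hdef 1 x y
  simp only [Finset.sum_range_succ, Finset.sum_range_zero, zero_add, Nat.sub_zero, Nat.sub_self, h0] at h
  unfold delta2
  rw [sub_eq_zero]
  exact h
end

section
/- Let f_t and f'_t be two equivalent one-parameter formal deformations of an n-BiHom-Lie algebra (g, [·,...,·], α, β). Then the infinitesimal deformations f₁ and f'₁ belong to the same cohomology class in H²(g, g); that is, f₁ − f'₁ = δ¹ψ₁ for some 1-cochain ψ₁, so f₁ − f'₁ ∈ B²(g, g). -/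
open Function Finset Module

universe u v w

lemma aux_sum_eq_one {n : ℕ} (c : Fin n → ℕ) (h : ∑ i, c i = 1) :
    ∃ i : Fin n, c = Pi.single i 1 := by
  obtain ⟨i, -, hi⟩ := Finset.exists_ne_zero_of_sum_ne_zero (s := Finset.univ) (f := c)
    (by rw [h]; exact one_ne_zero)
  have hsplit : c i + ∑ j ∈ Finset.univ.erase i, c j = 1 := by
    rw [Finset.add_sum_erase Finset.univ c (Finset.mem_univ i)]; exact h
  have hci : c i = 1 := by omega
  have hrest : ∑ j ∈ Finset.univ.erase i, c j = 0 := by omega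
  refine ⟨i, funext fun j => ?_⟩
  rcases eq_or_ne j i with rfl | hj
  · rw [hci, Pi.single_eq_same]
  · rw [Pi.single_eq_of_ne hj]
    exact (Finset.sum_eq_zero_iff.mp hrest) j (Finset.mem_erase.mpr ⟨hj, Finset.mem_univ j⟩)

/-- **Equivalent deformations are cohomologous.** If `f_t` and `f'_t` are equivalent
one-parameter formal deformations of the `n`-BiHom-Lie algebra `(g,[·,…,·],α,β)`
(`n = m + 1`), then `f₁ - f'₁ = δ¹ψ₁` for some `1`-cochain `ψ₁`, i.e.
`f₁ - f'₁ ∈ B²(g,g)` and `f₁`, `f'₁` have the same class in `H²(g,g)`. -/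
theorem equivalent_deformations_cohomologous {K : Type u} [Field K] {m : ℕ} {g : Type v}
    [AddCommGroup g] [Module K g] (L : NBiHomLie K m g)
    (F F' : ℕ → MultilinearMap K (fun _ : Fin (m + 1) => g) g)
    (hF : IsDeformation L F) (hF' : IsDeformation L F')
    (Ψ : ℕ → (g →ₗ[K] g)) (hΨ : IsEquivDeform L F F' Ψ) :
    ∃ ψ : g →ₗ[K] g, IsCochain1 L ⇑ψ ∧
      ∀ x : Fin (m + 1) → g, F 1 x - F' 1 x = delta1 L ⇑ψ x := by
  obtain ⟨hΨ0, hΨα, hΨβ, hΨeq⟩ := hΨ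
  refine ⟨Ψ 1, ⟨fun z => hΨα 1 z, fun z => hΨβ 1 z⟩, fun x => ?_⟩
  have key := hΨeq 1 x
  rw [Finset.sum_range_succ, Finset.sum_range_succ, Finset.sum_range_zero,
      Finset.sum_range_succ, Finset.sum_range_succ, Finset.sum_range_zero] at key
  simp only [zero_add, Nat.sub_self, Nat.sub_zero, Nat.reduceAdd, hΨ0] at key
  have h1 : (∑ c ∈ Fintype.piFinset (fun _ : Fin (m + 1) => Finset.range 2),
      if 1 + ∑ i, c i = 1 then F' 1 (fun i => Ψ (c i) (x i)) else 0) = F' 1 x := by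
    have hcong : ∀ c ∈ Fintype.piFinset (fun _ : Fin (m + 1) => Finset.range 2),
        (if 1 + ∑ i, c i = 1 then F' 1 (fun i => Ψ (c i) (x i)) else 0)
        = if c = (fun _ => 0) then F' 1 (fun i => Ψ (c i) (x i)) else 0 := by
      intro c _
      refine if_congr ?_ rfl rfl
      constructor
      · intro hc
        funext j
        have hs : ∑ i, c i = 0 := by omega
        exact (Finset.sum_eq_zero_iff.mp hs) j (Finset.mem_univ j)
      · intro hc; subst hc; simp
    rw [Finset.sum_congr rfl hcong, Finset.sum_ite_eq']
    rw [if_pos (by simp)]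
    simp only [hΨ0]
  have h0 : (∑ c ∈ Fintype.piFinset (fun _ : Fin (m + 1) => Finset.range 2),
      if ∑ i, c i = 1 then F' 0 (fun i => Ψ (c i) (x i)) else 0)
      = ∑ i : Fin (m + 1), L.br (Function.update x i (Ψ 1 (x i))) := by
    have step : ∀ c ∈ Fintype.piFinset (fun _ : Fin (m + 1) => Finset.range 2),
        (if ∑ i, c i = 1 then F' 0 (fun i => Ψ (c i) (x i)) else 0)
        = ∑ i : Fin (m + 1),
            if c = Pi.single i 1 then F' 0 (fun j => Ψ (c j) (x j)) else 0 := by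
      intro c _
      by_cases hc : ∑ i, c i = 1
      · obtain ⟨i, rfl⟩ := aux_sum_eq_one c hc
        rw [if_pos hc, Finset.sum_eq_single i]
        · rw [if_pos rfl]
        · intro j _ hji
          rw [if_neg]
          intro hcontra
          have hval := congrFun hcontra j
          rw [Pi.single_eq_of_ne hji, Pi.single_eq_same] at hval
          exact one_ne_zero hval.symm
        · intro h; exact absurd (Finset.mem_univ i) h
      · rw [if_neg hc, eq_comm]
        apply Finset.sum_eq_zero
        intro i _
        rw [if_neg]
        rintro rfl
        exact hc (by simp)
    rw [Finset.sum_congr rfl step, Finset.sum_comm]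
    refine Finset.sum_congr rfl fun i _ => ?_
    rw [Finset.sum_ite_eq' _ (Pi.single i 1)]
    rw [if_pos (by
      refine Fintype.mem_piFinset.mpr fun a => ?_
      rcases eq_or_ne a i with rfl | h
      · simp
      · simp [Pi.single_eq_of_ne h])]
    rw [hF'.1]
    congr 1
    funext j
    rcases eq_or_ne j i with rfl | hj
    · simp [Function.update]
    · simp [Function.update, hj, Pi.single_eq_of_ne hj, hΨ0]
  rw [h0, h1, hF.1] at key
  have hkey : F 1 x = (∑ i : Fin (m + 1), L.br (Function.update x i (Ψ 1 (x i))))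
      + F' 1 x - Ψ 1 (L.br x) := eq_sub_of_add_eq key
  rw [delta1, hkey]
  abel
end
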